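/- Let α : ℝ → ℝ⁵ be smooth with ⟨α,α⟩ ≡ 0, ⟨α',α'⟩ ≡ 0, ⟨α'',α''⟩ ≡ 4/9, and let x(s,t) = (s²/2 + (27/40)⟨α'''(t),α'''(t)⟩)·α(t) + (3s/2)·α'(t) + (3/2)·α''(t). Then ⟨∂x/∂s, ∂x/∂s⟩ = 0 and ⟨∂x/∂s, ∂x/∂t⟩ = -1 at every point. -/

import Mathlib

noncomputable def ip (v w : Fin 5 → ℝ) : ℝ :=
  -(v 0 * w 0) - v 1 * w 1 + v 2 * w 2 + v 3 * w 3 + v 4 * w 4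

lemma ip_hasDerivAt {f g : ℝ → Fin 5 → ℝ} {f' g' : Fin 5 → ℝ} {t : ℝ}
    (hf : HasDerivAt f f' t) (hg : HasDerivAt g g' t) :
    HasDerivAt (fun u => ip (f u) (g u)) (ip f' (g t) + ip (f t) g') t := by
  have c : ∀ i, HasDerivAt (fun u => f u i) (f' i) t := fun i =>
    (ContinuousLinearMap.proj (R := ℝ) (φ := fun _ : Fin 5 => ℝ) i).hasFDerivAt.comp_hasDerivAt t hf
  have d : ∀ i, HasDerivAt (fun u => g u i) (g' i) t := fun i =>
    (ContinuousLinearMap.proj (R := ℝ) (φ := fun _ : Fin 5 => ℝ) i).hasFDerivAt.comp_hasDerivAt t hg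
  have H := ((((((c 0).mul (d 0)).neg.sub ((c 1).mul (d 1))).add ((c 2).mul (d 2))).add
      ((c 3).mul (d 3))).add ((c 4).mul (d 4)))
  exact H.congr_deriv (by unfold ip; ring)

lemma ip_add_left (u v w : Fin 5 → ℝ) : ip (u + v) w = ip u w + ip v w := by
  simp only [ip, Pi.add_apply]; ring

lemma ip_add_right (u v w : Fin 5 → ℝ) : ip u (v + w) = ip u v + ip u w := by
  simp only [ip, Pi.add_apply]; ring

lemma ip_smul_left (c : ℝ) (u w : Fin 5 → ℝ) : ip (c • u) w = c * ip u w := by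
  simp only [ip, Pi.smul_apply, smul_eq_mul]; ring

lemma ip_smul_right (c : ℝ) (u w : Fin 5 → ℝ) : ip u (c • w) = c * ip u w := by
  simp only [ip, Pi.smul_apply, smul_eq_mul]; ring

lemma ip_comm (v w : Fin 5 → ℝ) : ip v w = ip w v := by simp [ip]; ring

theorem stmt4 (α : ℝ → (Fin 5 → ℝ)) (hα : ContDiff ℝ (⊤ : ℕ∞) α)
    (h0 : ∀ t, ip (α t) (α t) = 0)
    (h1 : ∀ t, ip (deriv α t) (deriv α t) = 0)
    (h2 : ∀ t, ip (deriv (deriv α) t) (deriv (deriv α) t) = 4 / 9)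
    (x : ℝ → ℝ → (Fin 5 → ℝ))
    (hx : ∀ s t, x s t =
      (s ^ 2 / 2 + (27 / 40) *
        ip (deriv (deriv (deriv α)) t) (deriv (deriv (deriv α)) t)) • α t
      + (3 * s / 2) • deriv α t + (3 / 2 : ℝ) • deriv (deriv α) t) :
    ∀ s t : ℝ,
      ip (deriv (fun s' => x s' t) s) (deriv (fun s' => x s' t) s) = 0 ∧
      ip (deriv (fun s' => x s' t) s) (deriv (fun t' => x s t') t) = -1 := by
  set d1 := deriv α with hd1
  set d2 := deriv d1 with hd2
  set d3 := deriv d2 with hd3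
  set d4 := deriv d3 with hd4
  have hα0 : ContDiff ℝ (⊤ : ℕ∞) α := hα.of_le (by simp)
  have hα1 : ContDiff ℝ (⊤ : ℕ∞) d1 := (contDiff_infty_iff_deriv.mp hα0).2
  have hα2 : ContDiff ℝ (⊤ : ℕ∞) d2 := (contDiff_infty_iff_deriv.mp hα1).2
  have hα3 : ContDiff ℝ (⊤ : ℕ∞) d3 := (contDiff_infty_iff_deriv.mp hα2).2
  have hA : ∀ t, HasDerivAt α (d1 t) t := fun t =>
    (hα.differentiable (by simp) t).hasDerivAt
  have hB : ∀ t, HasDerivAt d1 (d2 t) t := fun t =>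
    (hα1.differentiable (by simp) t).hasDerivAt
  have hC : ∀ t, HasDerivAt d2 (d3 t) t := fun t =>
    (hα2.differentiable (by simp) t).hasDerivAt
  have hD : ∀ t, HasDerivAt d3 (d4 t) t := fun t =>
    (hα3.differentiable (by simp) t).hasDerivAt
  -- derived identities
  have key : ∀ (f g : ℝ → Fin 5 → ℝ) (f' g' : ℝ → Fin 5 → ℝ) (c : ℝ),
      (∀ t, HasDerivAt f (f' t) t) → (∀ t, HasDerivAt g (g' t) t) →
      (∀ t, ip (f t) (g t) = c) →
      ∀ t, ip (f' t) (g t) + ip (f t) (g' t) = 0 := by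
    intro f g f' g' c hf hg hc t
    have h := (ip_hasDerivAt (hf t) (hg t)).deriv
    have h2 : deriv (fun u => ip (f u) (g u)) t = 0 := by
      have : (fun u => ip (f u) (g u)) = fun _ => c := funext hc
      rw [this, deriv_const]
    rw [h2] at h
    linarith
  have i01 : ∀ t, ip (α t) (d1 t) = 0 := by
    intro t
    have := key α α d1 d1 0 hA hA h0 t
    have hc := ip_comm (d1 t) (α t)
    linarith
  have i02 : ∀ t, ip (α t) (d2 t) = 0 := by
    intro t
    have := key α d1 d1 d2 0 hA hB i01 t
    have := h1 t
    have hc := ip_comm (d1 t) (α t)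
    have := i01 t
    linarith
  have i12 : ∀ t, ip (d1 t) (d2 t) = 0 := by
    intro t
    have := key d1 d1 d2 d2 0 hB hB h1 t
    have hc := ip_comm (d2 t) (d1 t)
    linarith
  have i03 : ∀ t, ip (α t) (d3 t) = 0 := by
    intro t
    have := key α d2 d1 d3 0 hA hC i02 t
    have := i12 t
    have hc := ip_comm (d2 t) (d1 t)
    linarith
  have i13 : ∀ t, ip (d1 t) (d3 t) = -(4/9) := by
    intro t
    have := key d1 d2 d2 d3 0 hB hC i12 t
    have := h2 t
    have hc := ip_comm (d2 t) (d1 t)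
    linarith
  intro s t
  -- s-derivative
  have hxs : HasDerivAt (fun s' => x s' t) (s • α t + (3/2 : ℝ) • d1 t) s := by
    have h := (((((hasDerivAt_pow 2 s).div_const 2).add_const
        ((27 / 40) * ip (d3 t) (d3 t))).smul_const (α t)).add
        ((((hasDerivAt_id s).const_mul 3).div_const 2).smul_const (d1 t))).add
        (hasDerivAt_const s ((3 / 2 : ℝ) • d2 t))
    have he : (fun s' => x s' t) = fun s' =>
        (s' ^ 2 / 2 + 27 / 40 * ip (d3 t) (d3 t)) • α t + (3 * s' / 2) • d1 t
          + (3 / 2 : ℝ) • d2 t := funext fun s' => hx s' t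
    rw [he]
    exact h.congr_deriv (by simp)
  -- t-derivative
  have hq : HasDerivAt (fun t' => ip (d3 t') (d3 t'))
      (ip (d4 t) (d3 t) + ip (d3 t) (d4 t)) t := ip_hasDerivAt (hD t) (hD t)
  have hxt : HasDerivAt (fun t' => x s t')
      (((27/40) * (ip (d4 t) (d3 t) + ip (d3 t) (d4 t))) • α t
        + (s ^ 2 / 2 + 27 / 40 * ip (d3 t) (d3 t)) • d1 t
        + (3 * s / 2) • d2 t + (3/2 : ℝ) • d3 t) t := by
    have hcoef : HasDerivAt (fun t' => s ^ 2 / 2 + 27 / 40 * ip (d3 t') (d3 t'))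
        ((27/40) * (ip (d4 t) (d3 t) + ip (d3 t) (d4 t))) t :=
      (hq.const_mul (27/40)).const_add (s ^ 2 / 2)
    have h := ((hcoef.smul (hA t)).add (((hB t).const_smul (3 * s / 2 : ℝ)))).add
        ((hC t).const_smul (3/2 : ℝ))
    have he : (fun t' => x s t') = fun t' =>
        (s ^ 2 / 2 + 27 / 40 * ip (d3 t') (d3 t')) • α t' + (3 * s / 2) • d1 t'
          + (3 / 2 : ℝ) • d2 t' := funext fun t' => hx s t'
    rw [he]
    exact h.congr_deriv (by module)
  have i10 : ∀ t, ip (d1 t) (α t) = 0 := fun t => (ip_comm _ _).trans (i01 t)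
  rw [hxs.deriv, hxt.deriv]
  constructor
  · simp only [ip_add_left, ip_add_right, ip_smul_left, ip_smul_right,
      h0, h1, i01, i10]
    ring
  · simp only [ip_add_left, ip_add_right, ip_smul_left, ip_smul_right,
      h0, h1, i01, i10, i02, i03, i12, i13]
    ring
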